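/- For fixed Δ, write the per-period cost as G(S_f) = h E[(S_f - X)^+] + p E[(X - S_f)^+] + c_f E[Q_f(Δ)] + c_s E[Q_s(Δ)] with X = Σ_{i=1}^{l_f+1} D_i - O(Δ). If the distributions of O(Δ), Q_f, and Q_s do not depend on S_f, then minimizing the total cost over (S_f, Δ) decomposes: for each Δ, the inner minimization over S_f is a Newsvendor problem whose optimal value is h E[(S_f*(Δ) - X)^+] + p E[(X - S_f*(Δ))^+] plus the Δ-dependent ordering costs, where S_f*(Δ) is the p/(p+h)-quantile of X. -/

import Mathlib

/-!
For fixed `Δ`, `G Δ ·` is the expected newsvendor loss `h (S - x)⁺ + p (x - S)⁺` of `X Δ`.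
This loss is convex in `S`, with right derivative `(h + p) 1{x ≤ S} - p` and left derivative
`(h + p) 1{x < S} - p`. Integrating these supporting lines shows that `S` minimizes the expected
loss as soon as `P(X < S) ≤ p / (p + h) ≤ P(X ≤ S)`, and the lower `p / (p + h)`-quantile
satisfies both inequalities by right continuity of the distribution function. The ordering
costs do not depend on `S`, so `T Δ (Sstar Δ)` is the minimum of `T Δ ·`, and the infimum over
pairs `(Δ, S)` is the infimum over `Δ` alone.
-/

open MeasureTheory ProbabilityTheory Set Function

theorem StieltjesFunction.le_apply_csInf (F : StieltjesFunction ℝ) {q : ℝ}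
    (hne : {x | q ≤ F x}.Nonempty) : q ≤ F (sInf {x | q ≤ F x}) := by
  refine ge_of_tendsto ((F.right_continuous _).mono Ioi_subset_Ici_self).tendsto
    (eventually_nhdsWithin_of_forall fun y hy => ?_)
  obtain ⟨a, ha, hay⟩ := exists_lt_of_csInf_lt hne hy
  exact ha.trans (F.mono hay.le)

theorem Monotone.leftLim_csInf_le {F : ℝ → ℝ} (hF : Monotone F) {q : ℝ}
    (hbdd : BddBelow {x | q ≤ F x}) : leftLim F (sInf {x | q ≤ F x}) ≤ q :=
  _root_.le_of_tendsto (hF.tendsto_leftLim _) (eventually_nhdsWithin_of_forall fun y hy =>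
    (not_le.1 (_root_.notMem_of_lt_csInf (s := {x | q ≤ F x}) (x := y) hy hbdd)).le)

theorem ProbabilityTheory.leftLim_cdf (ν : Measure ℝ) [IsProbabilityMeasure ν] (x : ℝ) :
    leftLim (cdf ν) x = ν.real (Iio x) := by
  have h := (cdf ν).measure_Iio (tendsto_cdf_atBot ν) x
  rw [measure_cdf, sub_zero] at h
  rw [measureReal_def, h, ENNReal.toReal_ofReal]
  exact (cdf_nonneg ν (x - 1)).trans ((monotone_cdf ν).le_leftLim (by linarith))

theorem Real.iInf_prod_eq_iInf_of_le {α β : Type*} (f : α → β → ℝ) (s : α → β)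
    (hs : ∀ a b, f a (s a) ≤ f a b) : ⨅ q : α × β, f q.1 q.2 = ⨅ a, f a (s a) := by
  rcases isEmpty_or_nonempty α with hα | hα
  · simp only [Real.iInf_of_isEmpty]
  have : Nonempty β := ⟨s hα.some⟩
  by_cases hbdd : BddBelow (range fun a => f a (s a))
  · have hbdd' : BddBelow (range fun q : α × β => f q.1 q.2) := by
      obtain ⟨m, hm⟩ := hbdd
      exact ⟨m, forall_mem_range.2 fun q => (hm ⟨q.1, rfl⟩).trans (hs q.1 q.2)⟩
    exact le_antisymm (le_ciInf fun a => ciInf_le hbdd' (a, s a))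
      (le_ciInf fun q => (ciInf_le hbdd q.1).trans (hs q.1 q.2))
  · have hbdd' : ¬ BddBelow (range fun q : α × β => f q.1 q.2) := fun ⟨m, hm⟩ =>
      hbdd ⟨m, forall_mem_range.2 fun a => hm ⟨(a, s a), rfl⟩⟩
    rw [Real.iInf_of_not_bddBelow hbdd, Real.iInf_of_not_bddBelow hbdd']

def newsvendorLoss (h p S x : ℝ) : ℝ := h * max (S - x) 0 + p * max (x - S) 0

section Newsvendor

variable {h p : ℝ}

theorem newsvendorLoss_add_le_of_le (hhp : 0 ≤ h + p) {S S' : ℝ} (hS : S ≤ S') (x : ℝ) :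
    newsvendorLoss h p S x + (S' - S) * ((Iic S).indicator (fun _ => h + p) x - p) ≤
      newsvendorLoss h p S' x := by
  unfold newsvendorLoss
  by_cases hx : x ≤ S
  · rw [indicator_of_mem (mem_Iic.2 hx), max_eq_left (by linarith : (0:ℝ) ≤ S' - x),
      max_eq_left (by linarith : (0:ℝ) ≤ S - x), max_eq_right (by linarith : x - S ≤ 0),
      max_eq_right (by linarith : x - S' ≤ 0)]
    linarith
  · rw [indicator_of_notMem (by simpa using hx)]
    rcases le_total x S' with hx' | hx'
    · rw [max_eq_left (by linarith : (0:ℝ) ≤ S' - x),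
        max_eq_right (by linarith : S - x ≤ 0), max_eq_left (by linarith : 0 ≤ x - S),
        max_eq_right (by linarith : x - S' ≤ 0)]
      nlinarith
    · rw [max_eq_right (by linarith : S' - x ≤ 0),
        max_eq_right (by linarith : S - x ≤ 0), max_eq_left (by linarith : 0 ≤ x - S),
        max_eq_left (by linarith : 0 ≤ x - S')]
      linarith

theorem newsvendorLoss_add_le_of_ge (hhp : 0 ≤ h + p) {S S' : ℝ} (hS : S' ≤ S) (x : ℝ) :
    newsvendorLoss h p S x + (S' - S) * ((Iio S).indicator (fun _ => h + p) x - p) ≤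
      newsvendorLoss h p S' x := by
  unfold newsvendorLoss
  by_cases hx : x < S
  · rw [indicator_of_mem (mem_Iio.2 hx), max_eq_left (by linarith : (0:ℝ) ≤ S - x),
      max_eq_right (by linarith : x - S ≤ 0)]
    rcases le_total x S' with hx' | hx'
    · rw [max_eq_left (by linarith : (0:ℝ) ≤ S' - x), max_eq_right (by linarith : x - S' ≤ 0)]
      linarith
    · rw [max_eq_right (by linarith : S' - x ≤ 0), max_eq_left (by linarith : 0 ≤ x - S')]
      nlinarith
  · rw [indicator_of_notMem (by simpa using hx), max_eq_right (by linarith : S - x ≤ 0),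
      max_eq_left (by linarith : 0 ≤ x - S), max_eq_right (by linarith : S' - x ≤ 0),
      max_eq_left (by linarith : 0 ≤ x - S')]
    linarith

variable {ν : Measure ℝ}

theorem integrable_newsvendorLoss [IsFiniteMeasure ν] (hν : Integrable id ν) (S : ℝ) :
    Integrable (newsvendorLoss h p S) ν :=
  ((((integrable_const S).sub hν).sup (integrable_const 0)).const_mul h).add
    (((hν.sub (integrable_const S)).sup (integrable_const 0)).const_mul p)

theorem integral_newsvendorLoss_add_le [IsProbabilityMeasure ν] (hν : Integrable id ν) {S S' c : ℝ} {s : Set ℝ}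
    (hs : MeasurableSet s)
    (hle : ∀ x, newsvendorLoss h p S x + c * (s.indicator (fun _ => h + p) x - p) ≤
      newsvendorLoss h p S' x) :
    ∫ x, newsvendorLoss h p S x ∂ν + c * ((h + p) * ν.real s - p) ≤
      ∫ x, newsvendorLoss h p S' x ∂ν := by
  have hind : Integrable (fun x => c * (s.indicator (fun _ => h + p) x - p)) ν :=
    (((integrable_const _).indicator hs).sub (integrable_const _)).const_mul c
  calc ∫ x, newsvendorLoss h p S x ∂ν + c * ((h + p) * ν.real s - p)
      = ∫ x, (newsvendorLoss h p S x + c * (s.indicator (fun _ => h + p) x - p)) ∂ν := by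
        rw [integral_add (integrable_newsvendorLoss hν S) hind, integral_const_mul,
          integral_sub ((integrable_const _).indicator hs) (integrable_const _),
          integral_indicator_const _ hs, integral_const]
        simp [mul_comm]
    _ ≤ ∫ x, newsvendorLoss h p S' x ∂ν :=
        integral_mono ((integrable_newsvendorLoss hν S).add hind)
          (integrable_newsvendorLoss hν S') hle

theorem integral_newsvendorLoss_le_of_measureReal [IsProbabilityMeasure ν] (hhp : 0 ≤ h + p)
    (hν : Integrable id ν) {S : ℝ} (hIic : p ≤ (h + p) * ν.real (Iic S)) (hIio : (h + p) * ν.real (Iio S) ≤ p)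
    (S' : ℝ) : ∫ x, newsvendorLoss h p S x ∂ν ≤ ∫ x, newsvendorLoss h p S' x ∂ν := by
  rcases le_total S S' with hS | hS
  · have := integral_newsvendorLoss_add_le hν measurableSet_Iic
      (newsvendorLoss_add_le_of_le hhp hS)
    nlinarith [mul_nonneg (sub_nonneg.2 hS) (sub_nonneg.2 hIic)]
  · have := integral_newsvendorLoss_add_le hν measurableSet_Iio
      (newsvendorLoss_add_le_of_ge hhp hS)
    nlinarith [mul_nonneg_of_nonpos_of_nonpos (sub_nonpos.2 hS) (sub_nonpos.2 hIio)]

theorem integral_newsvendorLoss_quantile_le [IsProbabilityMeasure ν] (hh : 0 < h) (hp : 0 < p)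
    (hν : Integrable id ν) (S : ℝ) :
    ∫ x, newsvendorLoss h p (sInf {x | p / (p + h) ≤ cdf ν x}) x ∂ν ≤
      ∫ x, newsvendorLoss h p S x ∂ν := by
  set q := p / (p + h)
  have hph : 0 < p + h := by linarith
  have hq0 : 0 < q := div_pos hp hph
  have hq1 : q < 1 := (div_lt_one hph).2 (by linarith)
  have hne : {x | q ≤ cdf ν x}.Nonempty :=
    ((tendsto_cdf_atTop ν).eventually_const_le hq1).exists
  have hbdd : BddBelow {x | q ≤ cdf ν x} := by
    obtain ⟨x₀, hx₀⟩ := ((tendsto_cdf_atBot ν).eventually_lt_const hq0).exists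
    exact ⟨x₀, fun x hx => le_of_not_ge fun hxx₀ =>
      (hx.trans (monotone_cdf ν hxx₀)).not_gt hx₀⟩
  have hIic := (cdf ν).le_apply_csInf hne
  have hIio := (monotone_cdf ν).leftLim_csInf_le hbdd
  rw [cdf_eq_real] at hIic
  rw [leftLim_cdf] at hIio
  refine integral_newsvendorLoss_le_of_measureReal (by linarith) hν ?_ ?_ S
  · rwa [div_le_iff₀ hph, mul_comm, add_comm] at hIic
  · rwa [le_div_iff₀ hph, mul_comm, add_comm] at hIio

theorem integral_newsvendorLoss_comp_quantile_le (hh : 0 < h) (hp : 0 < p) {Ω : Type*}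
    [MeasurableSpace Ω] {μ : Measure Ω} [IsProbabilityMeasure μ] {X : Ω → ℝ}
    (hX : Integrable X μ) (S : ℝ) :
    ∫ ω, newsvendorLoss h p (sInf {x | p / (p + h) ≤ (μ {ω | X ω ≤ x}).toReal}) (X ω) ∂μ ≤
      ∫ ω, newsvendorLoss h p S (X ω) ∂μ := by
  have hXm := hX.aemeasurable
  have : IsProbabilityMeasure (μ.map X) := Measure.isProbabilityMeasure_map hXm
  have hcdf (x : ℝ) : (μ {ω | X ω ≤ x}).toReal = cdf (μ.map X) x := by
    rw [cdf_eq_real, measureReal_def, Measure.map_apply_of_aemeasurable hXm measurableSet_Iic]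
    rfl
  have hint (c : ℝ) : ∫ x, newsvendorLoss h p c x ∂(μ.map X) =
      ∫ ω, newsvendorLoss h p c (X ω) ∂μ :=
    integral_map hXm (by unfold newsvendorLoss; fun_prop)
  simp only [hcdf, ← hint]
  exact integral_newsvendorLoss_quantile_le hh hp
    ((integrable_map_measure aestronglyMeasurable_id hXm).2 hX) S

end Newsvendor

theorem dual_index_decomposition_general
    {Ω : Type*} [MeasurableSpace Ω] (μ : Measure Ω) [IsProbabilityMeasure μ]
    (h p cf cs : ℝ) (hh : 0 < h) (hp : 0 < p)
    (X : ℝ → Ω → ℝ) (hXint : ∀ Δ, Integrable (X Δ) μ)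
    (EQf EQs : ℝ → ℝ)
    (G : ℝ → ℝ → ℝ)
    (hG : G = fun Δ S =>
      ∫ ω, (h * max (S - X Δ ω) 0 + p * max (X Δ ω - S) 0) ∂μ)
    (T : ℝ → ℝ → ℝ)
    (hT : T = fun Δ S => G Δ S + cf * EQf Δ + cs * EQs Δ)
    (Sstar : ℝ → ℝ)
    (hSstar : ∀ Δ, Sstar Δ =
      sInf {S : ℝ | p / (p + h) ≤ (μ {ω | X Δ ω ≤ S}).toReal}) :
    (∀ Δ S : ℝ, T Δ (Sstar Δ) ≤ T Δ S) ∧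
    (⨅ q : ℝ × ℝ, T q.1 q.2) = ⨅ Δ : ℝ, T Δ (Sstar Δ) := by
  have hmin (Δ S : ℝ) : T Δ (Sstar Δ) ≤ T Δ S := by
    have hG_le : G Δ (Sstar Δ) ≤ G Δ S := by
      rw [hG, hSstar]
      exact integral_newsvendorLoss_comp_quantile_le hh hp (hXint Δ) S
    simp only [hT]
    linarith
  exact ⟨hmin, Real.iInf_prod_eq_iInf_of_le T Sstar hmin⟩

/-- Separability + Newsvendor decomposition: with
`G Δ S = E[h (S - X Δ)⁺ + p (X Δ - S)⁺]` and total cost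
`T Δ S = G Δ S + c_f E[Q_f](Δ) + c_s E[Q_s](Δ)`, where the laws of
`X Δ = ∑ D_i - O(Δ)`, `Q_f(Δ)`, `Q_s(Δ)` do not depend on `S_f`, the inner
minimization over `S_f` for fixed `Δ` is a newsvendor problem solved by the
`p/(p+h)`-quantile `S*(Δ)` of `X Δ`, and the joint minimization reduces to a
one-dimensional search over `Δ`. -/
theorem dual_index_decomposition
    {Ω : Type*} [MeasurableSpace Ω] (μ : Measure Ω) [IsProbabilityMeasure μ]
    (h p cf cs : ℝ) (hh : 0 < h) (hp : 0 < p) (hcf : 0 ≤ cf) (hcs : 0 ≤ cs)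
    (X : ℝ → Ω → ℝ) (hXint : ∀ Δ, Integrable (X Δ) μ)
    (EQf EQs : ℝ → ℝ)
    (G : ℝ → ℝ → ℝ)
    (hG : G = fun Δ S =>
      ∫ ω, (h * max (S - X Δ ω) 0 + p * max (X Δ ω - S) 0) ∂μ)
    (T : ℝ → ℝ → ℝ)
    (hT : T = fun Δ S => G Δ S + cf * EQf Δ + cs * EQs Δ)
    (Sstar : ℝ → ℝ)
    (hSstar : ∀ Δ, Sstar Δ =
      sInf {S : ℝ | p / (p + h) ≤ (μ {ω | X Δ ω ≤ S}).toReal}) :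
    (∀ Δ S : ℝ, T Δ (Sstar Δ) ≤ T Δ S) ∧
    (⨅ q : ℝ × ℝ, T q.1 q.2) = ⨅ Δ : ℝ, T Δ (Sstar Δ) :=
  dual_index_decomposition_general μ h p cf cs hh hp X hXint EQf EQs G hG T hT Sstar hSstar
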